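/- arXiv:math/0507560 — 4 statements merged into one kernel-verified Lean document; each statement's English description precedes it below -/
import Mathlib

section
/- Let L : ℝⁿ × ℝⁿ → ℝ be a smooth Lagrangian, G a canonical semispray coefficient family for L, and S : ℝⁿ × ℝⁿ → ℝⁿ × ℝⁿ the vector field S(x,y) = (y, −2G(x,y)). For smooth vector fields X, Y : ℝⁿ × ℝⁿ → ℝⁿ × ℝⁿ let [X,Y](p) = (DY)(p)(X(p)) − (DX)(p)(Y(p)) denote the Lie bracket, and let θ_L(X)(x,y) = Σ_i ∂L/∂yⁱ(x,y) · (X(x,y))_xⁱ, where (X(x,y))_x is the first (base) component of X(x,y). Then for every smooth vector field X and every point p: S acting on the function θ_L(X) at p, minus θ_L([S,X])(p), equals DL(p)(X(p)); i.e. 𝓛_S θ_L = dL. -/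
open scoped ContDiff

/-! Along `S = (y, -2G)` the semispray equation, combined with the symmetry of the fibre
Hessian `∂²L/∂yⁱ∂yᵏ`, says exactly that `S(∂L/∂yⁱ) = ∂L/∂xⁱ`. Since the base component of `S`
is `y`, the base component of `[S, X]` is `S(X_x) - X_y`. Hence in `S(θ_L(X)) - θ_L([S, X])`
the terms `∂L/∂yⁱ · S(Xⁱ_x)` cancel, leaving `Σ ∂L/∂xⁱ · Xⁱ_x + ∂L/∂yⁱ · Xⁱ_y = dL(X)`. -/

/-- The tangent bundle of `ℝⁿ`, identified with `ℝⁿ × ℝⁿ` (base coordinates `x`,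
fibre coordinates `y`). -/
abbrev TM (n : ℕ) := (Fin n → ℝ) × (Fin n → ℝ)

/-- Partial derivative of `F` in the `i`-th base coordinate `xⁱ`. -/
noncomputable def pdx {n : ℕ} (F : TM n → ℝ) (i : Fin n) (p : TM n) : ℝ :=
  fderiv ℝ F p (Pi.single i 1, 0)

/-- Partial derivative of `F` in the `i`-th fibre coordinate `yⁱ`. -/
noncomputable def pdy {n : ℕ} (F : TM n → ℝ) (i : Fin n) (p : TM n) : ℝ :=
  fderiv ℝ F p (0, Pi.single i 1)

/-- The metric tensor `g_ij = ½ ∂²L/∂yⁱ∂yʲ` of a Lagrangian `L`. -/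
noncomputable def gmetric {n : ℕ} (L : TM n → ℝ) (i j : Fin n) (p : TM n) : ℝ :=
  (1 / 2) * pdy (pdy L j) i p

/-- `G` is a canonical semispray coefficient family for `L`:
`G` is smooth and `4 Σ_k g_ik Gᵏ = Σ_h yʰ ∂²L/∂xʰ∂yⁱ − ∂L/∂xⁱ` at every point. -/
def IsSemisprayFamily {n : ℕ} (L : TM n → ℝ) (G : TM n → Fin n → ℝ) : Prop :=
  ContDiff ℝ ∞ G ∧ ∀ (p : TM n) (i : Fin n),
    4 * ∑ k, gmetric L i k p * G p k = ∑ h, p.2 h * pdx (pdy L i) h p - pdx L i p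

/-- Lie bracket of vector fields on `ℝⁿ × ℝⁿ`:
`[X,Y](p) = (DY)(p)(X(p)) − (DX)(p)(Y(p))`. -/
noncomputable def lieBr {n : ℕ} (X Y : TM n → TM n) (p : TM n) : TM n :=
  fderiv ℝ Y p (X p) - fderiv ℝ X p (Y p)

section

variable {n : ℕ}

noncomputable def semispray (G : TM n → Fin n → ℝ) (q : TM n) : TM n :=
  (q.2, fun j => -2 * G q j)

noncomputable def cartanForm (L : TM n → ℝ) (X : TM n → TM n) : TM n → ℝ :=
  fun q => ∑ i, pdy L i q * (X q).1 i

theorem fderiv_apply_eq_sum_pdx_add_sum_pdy (F : TM n → ℝ) (p v : TM n) :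
    fderiv ℝ F p v = ∑ i, v.1 i * pdx F i p + ∑ i, v.2 i * pdy F i p := by
  have hv : v = ∑ i, v.1 i • ((Pi.single i 1, 0) : TM n)
      + ∑ i, v.2 i • ((0, Pi.single i 1) : TM n) := by
    refine Prod.ext ?_ ?_ <;> funext j <;>
      simp [Prod.fst_sum, Prod.snd_sum, Finset.sum_apply, Pi.single_apply]
  conv_lhs => rw [hv]
  simp only [map_add, map_sum, map_smul, smul_eq_mul, pdx, pdy]

theorem differentiableAt_fderiv_of_contDiffAt_two {L : TM n → ℝ} {p : TM n}
    (hL : ContDiffAt ℝ 2 L p) : DifferentiableAt ℝ (fderiv ℝ L) p :=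
  (hL.fderiv_right (m := 1) le_rfl).differentiableAt one_ne_zero

theorem differentiableAt_pdy {L : TM n → ℝ} {p : TM n} (hL : ContDiffAt ℝ 2 L p) (i : Fin n) :
    DifferentiableAt ℝ (pdy L i) p :=
  (differentiableAt_fderiv_of_contDiffAt_two hL).clm_apply (differentiableAt_const _)

theorem pdy_pdy_comm {L : TM n → ℝ} {p : TM n} (hL : ContDiffAt ℝ 2 L p) (i k : Fin n) :
    pdy (pdy L i) k p = pdy (pdy L k) i p := by
  have hd := differentiableAt_fderiv_of_contDiffAt_two hL
  have hsymm := hL.isSymmSndFDerivAt (by simp [minSmoothness_of_isRCLikeNormedField])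
  have hpdy : ∀ j v, fderiv ℝ (pdy L j) p v = fderiv ℝ (fderiv ℝ L) p v (0, Pi.single j 1) :=
    fun j v => by
      change fderiv ℝ (fun q => fderiv ℝ L q (0, Pi.single j 1)) p v = _
      simp [fderiv_clm_apply hd (differentiableAt_const _)]
  rw [pdy, pdy, hpdy, hpdy, hsymm]

theorem IsSemisprayFamily.fderiv_pdy_semispray {L : TM n → ℝ} {G : TM n → Fin n → ℝ}
    (hG : IsSemisprayFamily L G) {p : TM n} (hL : ContDiffAt ℝ 2 L p) (i : Fin n) :
    fderiv ℝ (pdy L i) p (semispray G p) = pdx L i p := by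
  have hg : ∑ k, -2 * G p k * pdy (pdy L i) k p = -4 * ∑ k, gmetric L i k p * G p k := by
    simp only [gmetric, pdy_pdy_comm hL i, Finset.mul_sum]
    exact Finset.sum_congr rfl fun k _ => by ring
  rw [fderiv_apply_eq_sum_pdx_add_sum_pdy, semispray, hg]
  linarith [hG.2 p i]

theorem fst_lieBr_semispray {G : TM n → Fin n → ℝ} {p : TM n} (hG : DifferentiableAt ℝ G p)
    (X : TM n → TM n) :
    (lieBr (semispray G) X p).1 = (fderiv ℝ X p (semispray G p)).1 - (X p).2 := by
  have hS : fderiv ℝ (semispray G) p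
      = (fderiv ℝ Prod.snd p).prod (fderiv ℝ (fun q j => -2 * G q j) p) :=
    differentiableAt_snd.fderiv_prodMk (by fun_prop)
  simp [lieBr, hS, fderiv_snd]

theorem fderiv_cartanForm_apply {L : TM n → ℝ} {X : TM n → TM n} {p : TM n}
    (hL : ∀ i, DifferentiableAt ℝ (pdy L i) p) (hX : DifferentiableAt ℝ X p) (v : TM n) :
    fderiv ℝ (cartanForm L X) p v
      = ∑ i, (fderiv ℝ (pdy L i) p v * (X p).1 i + pdy L i p * (fderiv ℝ X p v).1 i) := by
  have hXi := fun i => (hasFDerivAt_apply (𝕜 := ℝ) i (X p).1).comp p hX.hasFDerivAt.fst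
  have hθ : HasFDerivAt (cartanForm L X) _ p :=
    HasFDerivAt.fun_sum (u := Finset.univ) fun i _ => (hL i).hasFDerivAt.fun_mul (hXi i)
  rw [hθ.fderiv]
  simp [add_comm, mul_comm]

end

/-- `𝓛_S θ_L = dL`, i.e. for every smooth vector field `X` and point `p`,
`S(θ_L(X))(p) − θ_L([S,X])(p) = DL(p)(X(p))`, where `S(x,y) = (y, −2G(x,y))` is the
canonical semispray and `θ_L(X) = Σ_i ∂L/∂yⁱ · (X)_xⁱ` is the Cartan 1-form. -/
theorem lie_deriv_cartan_one_form (n : ℕ) (L : TM n → ℝ) (hL : ContDiff ℝ ∞ L)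
    (G : TM n → Fin n → ℝ) (hG : IsSemisprayFamily L G)
    (S : TM n → TM n) (hS : ∀ p : TM n, S p = (p.2, fun j => -2 * G p j)) :
    ∀ X : TM n → TM n, ContDiff ℝ ∞ X → ∀ p : TM n,
      fderiv ℝ (fun q => ∑ i, pdy L i q * (X q).1 i) p (S p)
        - ∑ i, pdy L i p * (lieBr S X p).1 i
        = fderiv ℝ L p (X p) := by
  intro X hX p
  obtain rfl : S = semispray G := funext hS
  have hL₂ : ContDiffAt ℝ 2 L p := hL.contDiffAt.of_le ENat.LEInfty.out
  change fderiv ℝ (cartanForm L X) p _ - _ = _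
  rw [fderiv_cartanForm_apply (differentiableAt_pdy hL₂) (hX.differentiable (by simp) p),
    fst_lieBr_semispray (hG.1.differentiable (by simp) p),
    fderiv_apply_eq_sum_pdx_add_sum_pdy L p (X p), ← Finset.sum_sub_distrib,
    ← Finset.sum_add_distrib]
  refine Finset.sum_congr rfl fun i _ => ?_
  rw [hG.fderiv_pdy_semispray hL₂ i, Pi.sub_apply]
  ring
end

section
/- Let L : ℝⁿ × ℝⁿ → ℝ be a smooth Lagrangian, G a canonical semispray coefficient family for L, and N^j_i = ∂Gʲ/∂yⁱ the canonical nonlinear connection coefficients. Then for every index i and every point (x,y): ∂L/∂xⁱ(x,y) − Σ_j N^j_i(x,y) ∂L/∂yʲ(x,y) = ½ ∂/∂yⁱ [ (x,y) ↦ Σ_j yʲ ∂L/∂xʲ(x,y) − 2 Σ_j Gʲ(x,y) ∂L/∂yʲ(x,y) ] (x,y); that is, the horizontal derivative satisfies δL/δxⁱ = ½ ∂(S(L))/∂yⁱ, i.e. d_hL = ½ d_J(S(L)). -/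
open scoped ContDiff

/-- Canonical nonlinear connection coefficients `N^j_i = ∂Gʲ/∂yⁱ`. -/
noncomputable def Ncoef {n : ℕ} (G : TM n → Fin n → ℝ) (j i : Fin n) (p : TM n) : ℝ :=
  pdy (fun q => G q j) i p

/-- The semispray derivative `S(F) = Σ_j yʲ ∂F/∂xʲ − 2 Σ_j Gʲ ∂F/∂yʲ`. -/
noncomputable def sprayDeriv {n : ℕ} (F : TM n → ℝ) (G : TM n → Fin n → ℝ) (p : TM n) : ℝ :=
  ∑ j, p.2 j * pdx F j p - 2 * ∑ j, G p j * pdy F j p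

/-- The horizontal derivative `δL/δxⁱ = ∂L/∂xⁱ − Σ_j N^j_i ∂L/∂yʲ`, where
`N^j_i = ∂Gʲ/∂yⁱ` are the canonical nonlinear connection coefficients. -/
noncomputable def hderiv {n : ℕ} (L : TM n → ℝ) (G : TM n → Fin n → ℝ) (i : Fin n)
    (p : TM n) : ℝ :=
  pdx L i p - ∑ j, Ncoef G j i p * pdy L j p

/-!
Differentiating `S(L)` in `yⁱ` by the product rule gives
`∂L/∂xⁱ + Σ_j yʲ ∂²L/∂yⁱ∂xʲ − 2 Σ_j (N^j_i ∂L/∂yʲ + Gʲ ∂²L/∂yⁱ∂yʲ)`.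
After swapping the mixed partials, the semispray equation says that the two second-order
terms together equal `∂L/∂xⁱ`, so what remains is `2 (∂L/∂xⁱ − Σ_j N^j_i ∂L/∂yʲ)`.
-/

section SecondDerivative

variable {E F : Type*} [NormedAddCommGroup E] [NormedSpace ℝ E]
  [NormedAddCommGroup F] [NormedSpace ℝ F] {f : E → F} {p : E}

theorem ContDiffAt.differentiableAt_fderiv_apply (hf : ContDiffAt ℝ 2 f p) (v : E) :
    DifferentiableAt ℝ (fun q => fderiv ℝ f q v) p :=
  ((hf.fderiv_right (m := 1) le_rfl).differentiableAt one_ne_zero).clm_apply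
    (differentiableAt_const v)

theorem fderiv_fderiv_apply_comm (hf : ContDiffAt ℝ 2 f p) (v w : E) :
    fderiv ℝ (fun q => fderiv ℝ f q v) p w = fderiv ℝ (fun q => fderiv ℝ f q w) p v := by
  have hd : DifferentiableAt ℝ (fderiv ℝ f) p :=
    (hf.fderiv_right (m := 1) le_rfl).differentiableAt one_ne_zero
  rw [fderiv_clm_apply hd (differentiableAt_const v),
    fderiv_clm_apply hd (differentiableAt_const w)]
  simp only [fderiv_fun_const, Pi.zero_apply, ContinuousLinearMap.comp_zero, zero_add,
    ContinuousLinearMap.flip_apply]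
  exact hf.isSymmSndFDerivAt (by simp) w v

end SecondDerivative

section PartialDerivatives

variable {n : ℕ} {f g : TM n → ℝ} {p : TM n}

theorem pdy_pdx_comm (hf : ContDiffAt ℝ 2 f p) (i j : Fin n) :
    pdy (pdx f j) i p = pdx (pdy f i) j p :=
  fderiv_fderiv_apply_comm hf _ _

theorem pdy_sub (hf : DifferentiableAt ℝ f p) (hg : DifferentiableAt ℝ g p) (i : Fin n) :
    pdy (fun q => f q - g q) i p = pdy f i p - pdy g i p := by
  simp only [pdy, fderiv_fun_sub hf hg, sub_apply]

theorem pdy_const_mul (hf : DifferentiableAt ℝ f p) (c : ℝ) (i : Fin n) :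
    pdy (fun q => c * f q) i p = c * pdy f i p := by
  simp only [pdy, fderiv_const_mul hf, smul_apply, smul_eq_mul]

theorem pdy_mul (hf : DifferentiableAt ℝ f p) (hg : DifferentiableAt ℝ g p) (i : Fin n) :
    pdy (fun q => f q * g q) i p = pdy f i p * g p + f p * pdy g i p := by
  simp only [pdy, fderiv_fun_mul hf hg, add_apply, smul_apply, smul_eq_mul]
  ring

theorem pdy_sum {ι : Type*} (s : Finset ι) {f : ι → TM n → ℝ}
    (hf : ∀ j ∈ s, DifferentiableAt ℝ (f j) p) (i : Fin n) :
    pdy (fun q => ∑ j ∈ s, f j q) i p = ∑ j ∈ s, pdy (f j) i p := by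
  simp only [pdy, fderiv_fun_sum hf, sum_apply]

theorem pdy_snd_apply (i j : Fin n) :
    pdy (fun q : TM n => q.2 j) i p = (Pi.single i 1 : Fin n → ℝ) j := by
  have h : HasFDerivAt (fun q : TM n => q.2 j) _ p :=
    (hasFDerivAt_apply (𝕜 := ℝ) j p.2).comp p hasFDerivAt_snd
  rw [pdy, h.fderiv]
  rfl

end PartialDerivatives

theorem pdy_sprayDeriv {n : ℕ} {L : TM n → ℝ} {G : TM n → Fin n → ℝ} {p : TM n}
    (hL : ContDiffAt ℝ 2 L p) (hG : DifferentiableAt ℝ G p) (i : Fin n) :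
    pdy (sprayDeriv L G) i p = pdx L i p + ∑ j, p.2 j * pdx (pdy L i) j p
      - 2 * ∑ j, (Ncoef G j i p * pdy L j p + G p j * pdy (pdy L j) i p) := by
  have hy (j : Fin n) : DifferentiableAt ℝ (fun q : TM n => q.2 j) p := by fun_prop
  have hG' (j : Fin n) : DifferentiableAt ℝ (fun q => G q j) p := differentiableAt_pi.1 hG j
  have hxL (j : Fin n) : DifferentiableAt ℝ (pdx L j) p := hL.differentiableAt_fderiv_apply _
  have hyL (j : Fin n) : DifferentiableAt ℝ (pdy L j) p := hL.differentiableAt_fderiv_apply _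
  have hyxL : ∀ j ∈ Finset.univ, DifferentiableAt ℝ (fun q : TM n => q.2 j * pdx L j q) p :=
    fun j _ => (hy j).fun_mul (hxL j)
  have hGyL : ∀ j ∈ Finset.univ, DifferentiableAt ℝ (fun q => G q j * pdy L j q) p :=
    fun j _ => (hG' j).fun_mul (hyL j)
  have hpdy_yxL : pdy (fun q => ∑ j, q.2 j * pdx L j q) i p
      = pdx L i p + ∑ j, p.2 j * pdx (pdy L i) j p := by
    rw [pdy_sum _ hyxL]
    simp only [pdy_mul (hy _) (hxL _), pdy_snd_apply, pdy_pdx_comm hL, Finset.sum_add_distrib]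
    simp [Pi.single_apply, ite_mul]
  have hpdy_GyL : pdy (fun q => ∑ j, G q j * pdy L j q) i p
      = ∑ j, (Ncoef G j i p * pdy L j p + G p j * pdy (pdy L j) i p) := by
    rw [pdy_sum _ hGyL]
    simp only [pdy_mul (hG' _) (hyL _), Ncoef]
  have hsum_GyL := DifferentiableAt.fun_sum hGyL
  unfold sprayDeriv
  rw [pdy_sub (DifferentiableAt.fun_sum hyxL) (hsum_GyL.const_mul 2),
    pdy_const_mul hsum_GyL, hpdy_yxL, hpdy_GyL]

/-- `d_hL = ½ d_J(S(L))`, in coordinates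
`δL/δxⁱ = ∂L/∂xⁱ − Σ_j N^j_i ∂L/∂yʲ = ½ ∂(S(L))/∂yⁱ`. -/
theorem horizontal_deriv_eq_half_fibre_deriv_of_spray_deriv (n : ℕ)
    (L : TM n → ℝ) (hL : ContDiff ℝ ∞ L)
    (G : TM n → Fin n → ℝ) (hG : IsSemisprayFamily L G) (i : Fin n) (p : TM n) :
    hderiv L G i p = (1 / 2) * pdy (fun q => sprayDeriv L G q) i p := by
  obtain ⟨hG_smooth, hG_eq⟩ := hG
  have hsecond_order : 2 * ∑ j, G p j * pdy (pdy L j) i p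
      = ∑ h, p.2 h * pdx (pdy L i) h p - pdx L i p := by
    rw [← hG_eq p i, Finset.mul_sum, Finset.mul_sum]
    refine Finset.sum_congr rfl fun j _ => ?_
    rw [gmetric]
    ring
  rw [pdy_sprayDeriv (hL.contDiffAt.of_le ENat.LEInfty.out)
    ((hG_smooth.differentiable (by simp)) p), Finset.sum_add_distrib, hderiv]
  linarith
end

section
/- Let L : ℝⁿ × ℝⁿ → ℝ be a smooth Lagrangian and G a canonical semispray coefficient family for L. For each point p = (x,y) define the bilinear form ω_p on ℝⁿ × ℝⁿ by ω_p((u₁,u₂),(v₁,v₂)) = Σ_{i,j} ∂²L/∂xʲ∂yⁱ(p) (u₁ʲ v₁ⁱ − v₁ʲ u₁ⁱ) + Σ_{i,j} ∂²L/∂yʲ∂yⁱ(p) (u₂ʲ v₁ⁱ − v₂ʲ u₁ⁱ) (the Cartan 2-form ω_L = d(θ_L), θ_L = Σ (∂L/∂yⁱ)dxⁱ). Let S(p) = (y, −2G(p)) and let 𝔼(x,y) = Σ_k yᵏ ∂L/∂yᵏ(x,y) be the Liouville derivative ℂ(L). Then for every p and every v ∈ ℝⁿ × ℝⁿ, ω_p(S(p),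 v) = D(L − 𝔼)(p)(v); that is, the vector field S with coefficients Gⁱ = ¼ g^{ik}(∂²L/∂yᵏ∂xʰ yʰ − ∂L/∂xᵏ) satisfies the defining equation ι_S ω_L = d(L − ℂ(L)) of the canonical semispray. -/
open scoped ContDiff

/-- The Cartan 2-form `ω_L = d θ_L` of `L`, as a bilinear form at the point `p`. -/
noncomputable def cartan2 {n : ℕ} (L : TM n → ℝ) (p u v : TM n) : ℝ :=
  (∑ i, ∑ j, pdx (pdy L i) j p * (u.1 j * v.1 i - v.1 j * u.1 i))
  + ∑ i, ∑ j, pdy (pdy L i) j p * (u.2 j * v.1 i - v.2 j * u.1 i)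

/-- Decomposition of a continuous linear functional on `TM n` in coordinates. -/
lemma clm_decomp {n : ℕ} (φ : TM n →L[ℝ] ℝ) (v : TM n) :
    φ v = (∑ j, v.1 j * φ (Pi.single j 1, 0)) + ∑ j, v.2 j * φ (0, Pi.single j 1) := by
  have hv : v = (∑ j, v.1 j • ((Pi.single j 1 : Fin n → ℝ), (0 : Fin n → ℝ)))
      + ∑ j, v.2 j • ((0 : Fin n → ℝ), (Pi.single j 1 : Fin n → ℝ)) := by
    ext i
    · simp [Prod.fst_sum, Prod.snd_sum, Finset.sum_apply, Pi.single_apply, mul_comm]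
    · simp [Prod.fst_sum, Prod.snd_sum, Finset.sum_apply, Pi.single_apply, mul_comm]
  calc φ v = φ ((∑ j, v.1 j • ((Pi.single j 1 : Fin n → ℝ), (0 : Fin n → ℝ)))
      + ∑ j, v.2 j • ((0 : Fin n → ℝ), (Pi.single j 1 : Fin n → ℝ))) := by rw [← hv]
    _ = _ := by
      rw [map_add, map_sum, map_sum]
      congr 1 <;> exact Finset.sum_congr rfl fun j _ => by rw [map_smul]; rfl

/-- The purely algebraic identity behind the defining equation. -/
lemma key_alg {n : ℕ} (A B : Fin n → Fin n → ℝ) (c d y v1 v2 G : Fin n → ℝ)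
    (hB : ∀ i j, B i j = B j i)
    (hg : ∀ i, 2 * ∑ k, B i k * G k = (∑ h, y h * A h i) - c i) :
    ((∑ i, ∑ j, A j i * (y j * v1 i - v1 j * y i))
      + ∑ i, ∑ j, B j i * ((-2 * G j) * v1 i - v2 j * y i))
    = ((∑ j, v1 j * c j) + ∑ j, v2 j * d j)
      - ∑ k, (y k * ((∑ j, v1 j * A j k) + ∑ j, v2 j * B j k) + d k * v2 k) := by
  have h1 : ∀ i, (∑ j, B j i * ((-2 * G j) * v1 i - v2 j * y i))
      = -(v1 i * ((∑ h, y h * A h i) - c i)) - ∑ j, B j i * (v2 j * y i) := by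
    intro i
    have e1 : (∑ j, B j i * ((-2 * G j) * v1 i - v2 j * y i))
        = (-(v1 i)) * (2 * ∑ k, B i k * G k) - ∑ j, B j i * (v2 j * y i) := by
      rw [Finset.mul_sum, Finset.mul_sum, ← Finset.sum_sub_distrib]
      refine Finset.sum_congr rfl fun j _ => ?_
      rw [hB i j]; ring
    rw [e1, hg i]; ring
  simp only [h1]
  rw [← Finset.sum_add_distrib, ← Finset.sum_add_distrib, ← Finset.sum_sub_distrib]
  refine Finset.sum_congr rfl fun i _ => ?_
  have hA : (∑ j, A j i * (y j * v1 i - v1 j * y i))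
      = v1 i * (∑ h, y h * A h i) - y i * ∑ j, v1 j * A j i := by
    rw [Finset.mul_sum, Finset.mul_sum, ← Finset.sum_sub_distrib]
    exact Finset.sum_congr rfl fun j _ => by ring
  have hBs : (∑ j, B j i * (v2 j * y i)) = y i * ∑ j, v2 j * B j i := by
    rw [Finset.mul_sum]
    exact Finset.sum_congr rfl fun j _ => by ring
  rw [hA, hBs]; ring

/-- the semispray `S(x,y) = (y, −2G(x,y))` built from the canonical
coefficients `Gⁱ = ¼ g^{ik}(∂²L/∂yᵏ∂xʰ yʰ − ∂L/∂xᵏ)` satisfies the defining equation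
`ι_S ω_L = d(L − ℂ(L))` of the canonical semispray, where `ℂ(L)(x,y) = Σ_k yᵏ ∂L/∂yᵏ`. -/
theorem canonical_semispray_defining_equation (n : ℕ) (L : TM n → ℝ)
    (hL : ContDiff ℝ ∞ L) (G : TM n → Fin n → ℝ) (hG : IsSemisprayFamily L G) :
    ∀ (p v : TM n),
      cartan2 L p (p.2, fun j => -2 * G p j) v
        = fderiv ℝ (fun q : TM n => L q - ∑ k, q.2 k * pdy L k q) p v := by
  intro p v
  obtain ⟨-, hGeq⟩ := hG
  have hLd : Differentiable ℝ L := hL.differentiable (by simp)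
  have hfd : ContDiff ℝ ∞ (fderiv ℝ L) := hL.fderiv_right (by norm_num)
  set D1 : TM n →L[ℝ] ℝ := fderiv ℝ L p with hD1def
  set D2 : TM n →L[ℝ] (TM n →L[ℝ] ℝ) := fderiv ℝ (fderiv ℝ L) p with hD2def
  have hD2 : HasFDerivAt (fderiv ℝ L) D2 p :=
    (hfd.differentiable (by simp)).differentiableAt.hasFDerivAt
  have hflip : ∀ w : TM n, HasFDerivAt (fun q => fderiv ℝ L q w) (D2.flip w) p := by
    intro w
    have h0 : HasFDerivAt (fun _ : TM n => w) (0 : TM n →L[ℝ] TM n) p := hasFDerivAt_const w p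
    have := hD2.clm_apply h0
    simpa using this
  have hsymm : ∀ a b : TM n, D2 a b = D2 b a := by
    intro a b
    exact hL.contDiffAt.isSymmSndFDerivAt
      (by rw [minSmoothness_of_isRCLikeNormedField]; exact WithTop.coe_le_coe.mpr le_top) a b
  have hpdy2 : ∀ i j : Fin n, pdy (pdy L i) j p
      = D2 (0, Pi.single j 1) (0, Pi.single i 1) := by
    intro i j
    show fderiv ℝ (fun q => fderiv ℝ L q (0, Pi.single i 1)) p (0, Pi.single j 1) = _
    rw [(hflip (0, Pi.single i 1)).fderiv]
    rfl
  have hpdx2 : ∀ i j : Fin n, pdx (pdy L i) j p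
      = D2 (Pi.single j 1, 0) (0, Pi.single i 1) := by
    intro i j
    show fderiv ℝ (fun q => fderiv ℝ L q (0, Pi.single i 1)) p (Pi.single j 1, 0) = _
    rw [(hflip (0, Pi.single i 1)).fderiv]
    rfl
  -- derivative of the right-hand side function
  have hterm : ∀ k : Fin n, HasFDerivAt (fun q : TM n => q.2 k * pdy L k q)
      (p.2 k • D2.flip (0, Pi.single k 1)
        + D1 (0, Pi.single k 1) • ((ContinuousLinearMap.proj k).comp
            (ContinuousLinearMap.snd ℝ (Fin n → ℝ) (Fin n → ℝ)))) p := by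
    intro k
    have hc : HasFDerivAt (fun q : TM n => q.2 k)
        ((ContinuousLinearMap.proj k).comp
          (ContinuousLinearMap.snd ℝ (Fin n → ℝ) (Fin n → ℝ))) p :=
      ((ContinuousLinearMap.proj k).comp
        (ContinuousLinearMap.snd ℝ (Fin n → ℝ) (Fin n → ℝ))).hasFDerivAt
    have hd : HasFDerivAt (fun q : TM n => pdy L k q) (D2.flip (0, Pi.single k 1)) p := by
      simpa [pdy] using hflip (0, Pi.single k 1)
    exact hc.mul hd
  have hF : HasFDerivAt (fun q : TM n => L q - ∑ k, q.2 k * pdy L k q)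
      (D1 - ∑ k, (p.2 k • D2.flip (0, Pi.single k 1)
        + D1 (0, Pi.single k 1) • ((ContinuousLinearMap.proj k).comp
            (ContinuousLinearMap.snd ℝ (Fin n → ℝ) (Fin n → ℝ))))) p :=
    (hLd.differentiableAt.hasFDerivAt).sub (HasFDerivAt.fun_sum fun k _ => hterm k)
  rw [hF.fderiv]
  have hRHS : (D1 - ∑ k, (p.2 k • D2.flip (0, Pi.single k 1)
        + D1 (0, Pi.single k 1) • ((ContinuousLinearMap.proj k).comp
            (ContinuousLinearMap.snd ℝ (Fin n → ℝ) (Fin n → ℝ))))) v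
      = D1 v - ∑ k, (p.2 k * D2 v (0, Pi.single k 1) + D1 (0, Pi.single k 1) * v.2 k) := by
    simp [ContinuousLinearMap.sub_apply, ContinuousLinearMap.sum_apply,
      ContinuousLinearMap.add_apply, ContinuousLinearMap.smul_apply,
      ContinuousLinearMap.flip_apply, ContinuousLinearMap.comp_apply,
      ContinuousLinearMap.proj_apply, ContinuousLinearMap.coe_snd', smul_eq_mul]
  rw [hRHS]
  have hD2v : ∀ w : TM n, D2 v w
      = (∑ j, v.1 j * D2 (Pi.single j 1, 0) w) + ∑ j, v.2 j * D2 (0, Pi.single j 1) w := by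
    intro w
    have := clm_decomp (D2.flip w) v
    simpa [ContinuousLinearMap.flip_apply] using this
  have hD1v : D1 v = (∑ j, v.1 j * D1 (Pi.single j 1, 0)) + ∑ j, v.2 j * D1 (0, Pi.single j 1) :=
    clm_decomp D1 v
  simp only [hD2v, hD1v]
  -- expand the left-hand side
  unfold cartan2
  simp only [hpdx2, hpdy2]
  have hkey := key_alg (n := n)
    (fun j i => D2 (Pi.single j 1, 0) (0, Pi.single i 1))
    (fun j i => D2 (0, Pi.single j 1) (0, Pi.single i 1))
    (fun i => D1 (Pi.single i 1, 0)) (fun i => D1 (0, Pi.single i 1))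
    p.2 v.1 v.2 (G p)
    (fun i j => hsymm _ _)
    ?_
  · exact hkey
  · intro i
    have hg := hGeq p i
    have e1 : (4 : ℝ) * ∑ k, gmetric L i k p * G p k
        = 2 * ∑ k, D2 (0, Pi.single i 1) (0, Pi.single k 1) * G p k := by
      rw [Finset.mul_sum, Finset.mul_sum]
      refine Finset.sum_congr rfl fun k _ => ?_
      rw [gmetric, hpdy2]
      ring
    rw [e1] at hg
    rw [hg]
    simp only [hpdx2]
    rw [show pdx L i p = D1 (Pi.single i 1, 0) from rfl]
end

section
/- Let L : ℝⁿ × ℝⁿ → ℝ be a smooth Lagrangian, G a canonical semispray coefficient family for L, and define the energy E_L(x,y) = Σ_k yᵏ ∂L/∂yᵏ(x,y) − L(x,y) (that is, E_L = ℂ(L) − L). Then the semispray derivative of the energy vanishes identically: S(E_L) = Σ_j yʲ ∂E_L/∂xʲ − 2 Σ_j Gʲ ∂E_L/∂yʲ = 0 at every point of ℝⁿ × ℝⁿ. In other words, the energy of a Lagrangian is a conservation law: it is constant along the integral curves of the canonical semispray (the solutions of the Euler–Lagrange equations). -/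
open scoped ContDiff

/-!
Differentiating `E_L = Σ yᵏ ∂L/∂yᵏ − L`, the terms `∂L/∂yʲ` cancel and `∂E_L/∂yʲ = 2 Σ_k g_jk yᵏ`,
while `Σ_j yʲ ∂E_L/∂xʲ = Σ_i yⁱ (Σ_h yʰ ∂²L/∂xʰ∂yⁱ − ∂L/∂xⁱ)`. Since `g` is symmetric,
`2 Σ_j Gʲ ∂E_L/∂yʲ = Σ_i yⁱ · 4 Σ_k g_ik Gᵏ`, and the semispray equation identifies the two.
-/

open Finset

noncomputable def energy {n : ℕ} (L : TM n → ℝ) (q : TM n) : ℝ :=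
  ∑ k, q.2 k * pdy L k q - L q

section

variable {n : ℕ} {L : TM n → ℝ}

lemma differentiable_fderiv_of_contDiff_two (hL : ContDiff ℝ 2 L) :
    Differentiable ℝ (fderiv ℝ L) :=
  (hL.fderiv_right (m := 1) (by norm_num)).differentiable one_ne_zero

lemma differentiable_pdy (hL : ContDiff ℝ 2 L) (k : Fin n) : Differentiable ℝ (pdy L k) :=
  fun q => ((differentiable_fderiv_of_contDiff_two hL) q).clm_apply (differentiableAt_const _)

lemma fderiv_pdy_apply (hL : ContDiff ℝ 2 L) (k : Fin n) (p v : TM n) :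
    fderiv ℝ (pdy L k) p v = fderiv ℝ (fderiv ℝ L) p v (0, Pi.single k 1) := by
  have h := fderiv_clm_apply (differentiable_fderiv_of_contDiff_two hL p)
    (differentiableAt_const (c := ((0 : Fin n → ℝ), (Pi.single k 1 : Fin n → ℝ))))
  change fderiv ℝ (fun q => fderiv ℝ L q (0, Pi.single k 1)) p v = _
  simp [h]

lemma gmetric_comm (hL : ContDiff ℝ 2 L) (i j : Fin n) (p : TM n) :
    gmetric L i j p = gmetric L j i p := by
  have hsymm := hL.contDiffAt.isSymmSndFDerivAt (x := p) (by simp)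
  rw [gmetric, gmetric, pdy, pdy, fderiv_pdy_apply hL, fderiv_pdy_apply hL, hsymm.eq]

lemma fderiv_energy_apply (hL : ContDiff ℝ 2 L) (p v : TM n) :
    fderiv ℝ (energy L) p v =
      ∑ k, (p.2 k * fderiv ℝ (pdy L k) p v + pdy L k p * v.2 k) - fderiv ℝ L p v := by
  have hfib (k : Fin n) : HasFDerivAt (fun q : TM n => q.2 k)
      ((ContinuousLinearMap.proj k).comp (ContinuousLinearMap.snd ℝ _ _)) p :=
    ((ContinuousLinearMap.proj (R := ℝ) (φ := fun _ : Fin n => ℝ) k).comp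
      (ContinuousLinearMap.snd ℝ (Fin n → ℝ) (Fin n → ℝ))).hasFDerivAt
  have h : HasFDerivAt (energy L) _ p := (HasFDerivAt.fun_sum (u := univ) fun k _ =>
    (hfib k).mul (differentiable_pdy hL k p).hasFDerivAt).sub
      ((hL.differentiable two_ne_zero) p).hasFDerivAt
  rw [h.fderiv]
  simp

lemma pdx_energy (hL : ContDiff ℝ 2 L) (j : Fin n) (p : TM n) :
    pdx (energy L) j p = ∑ k, p.2 k * pdx (pdy L k) j p - pdx L j p := by
  simp [pdx, fderiv_energy_apply hL]

lemma pdy_energy (hL : ContDiff ℝ 2 L) (j : Fin n) (p : TM n) :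
    pdy (energy L) j p = 2 * ∑ k, gmetric L j k p * p.2 k := by
  simp only [pdy, fderiv_energy_apply hL, Pi.single_apply, mul_ite, mul_one, mul_zero,
    sum_add_distrib, sum_ite_eq', mem_univ, ↓reduceIte, add_sub_cancel_right, gmetric, mul_sum]
  exact sum_congr rfl fun k _ => by ring

lemma sum_mul_pdx_energy (hL : ContDiff ℝ 2 L) (p : TM n) :
    ∑ j, p.2 j * pdx (energy L) j p =
      ∑ i, p.2 i * (∑ h, p.2 h * pdx (pdy L i) h p - pdx L i p) := by
  simp_rw [pdx_energy hL, mul_sub, mul_sum, sum_sub_distrib]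
  rw [sum_comm]
  exact congrArg₂ _ (sum_congr rfl fun i _ => sum_congr rfl fun h _ => by ring) rfl

lemma sum_mul_pdy_energy (hL : ContDiff ℝ 2 L) (G : Fin n → ℝ) (p : TM n) :
    ∑ j, G j * pdy (energy L) j p = 2 * ∑ i, p.2 i * ∑ k, gmetric L i k p * G k := by
  simp_rw [pdy_energy hL, mul_sum]
  rw [sum_comm]
  exact sum_congr rfl fun i _ => sum_congr rfl fun k _ => by rw [gmetric_comm hL k i]; ring

end

/-- the energy `E_L = ℂ(L) − L = Σ_k yᵏ ∂L/∂yᵏ − L` of a Lagrangian is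
a conservation law: its semispray derivative vanishes identically, i.e. it is
constant along the integral curves of the canonical semispray. -/
theorem energy_is_conservation_law (n : ℕ) (L : TM n → ℝ) (hL : ContDiff ℝ ∞ L)
    (G : TM n → Fin n → ℝ) (hG : IsSemisprayFamily L G)
    (E : TM n → ℝ) (hE : ∀ p : TM n, E p = (∑ k, p.2 k * pdy L k p) - L p) :
    ∀ p : TM n, sprayDeriv E G p = 0 := by
  have hL2 : ContDiff ℝ 2 L := hL.of_le (WithTop.coe_le_coe.2 le_top)
  obtain rfl : E = energy L := funext hE
  intro p
  rw [sprayDeriv, sum_mul_pdx_energy hL2, sum_mul_pdy_energy hL2]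
  simp_rw [← hG.2 p, mul_left_comm _ (4 : ℝ), ← mul_sum]
  ring
end
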